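/- arXiv:1202.0473 — 2 statements merged into one kernel-verified Lean document; each statement's English description precedes it below -/
import Mathlib

section
/- Let $A, B, X \in \mathbb{M}_n$ be such that the block matrix $M = \begin{bmatrix} A & X \\ X^* & B \end{bmatrix} \in \mathbb{M}_{2n}$ is positive semi-definite. Then there exist unitary matrices $U, V \in \mathbb{M}_{2n}$ such that $M = U \begin{bmatrix} \frac{A+B}{2} + \mathrm{Re}\,X & 0 \\ 0 & 0 \end{bmatrix} U^* + V \begin{bmatrix} 0 & 0 \\ 0 & \frac{A+B}{2} - \mathrm{Re}\,X \end{bmatrix} V^*$. -/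
open Matrix
open scoped ComplexOrder

/-- The absolute value `|Z| = (Zᴴ Z)^(1/2)` of a square complex matrix. -/
noncomputable def matAbs {m : Type*} [Fintype m] [DecidableEq m]
    (Z : Matrix m m ℂ) : Matrix m m ℂ :=
  ((Matrix.posSemidef_conjTranspose_mul_self Z).1.eigenvectorUnitary : Matrix m m ℂ) *
    Matrix.diagonal ((↑) ∘ (√·) ∘ (Matrix.posSemidef_conjTranspose_mul_self Z).1.eigenvalues) *
    (star (Matrix.posSemidef_conjTranspose_mul_self Z).1.eigenvectorUnitary : Matrix m m ℂ)

/-- Functional calculus: apply `f : ℝ → ℝ` to the eigenvalues of a Hermitian matrix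
(junk value `0` if the matrix is not Hermitian). -/
noncomputable def hermApply {m : Type*} [Fintype m] [DecidableEq m]
    (f : ℝ → ℝ) (S : Matrix m m ℂ) : Matrix m m ℂ :=
  if hS : S.IsHermitian then
    (hS.eigenvectorUnitary : Matrix m m ℂ) *
      Matrix.diagonal (fun i => (f (hS.eigenvalues i) : ℂ)) *
      (star (hS.eigenvectorUnitary : Matrix m m ℂ))
  else 0

/-- Real power of a positive semi-definite matrix by functional calculus. -/
noncomputable def matPow {m : Type*} [Fintype m] [DecidableEq m]
    (S : Matrix m m ℂ) (p : ℝ) : Matrix m m ℂ :=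
  hermApply (fun x => x ^ p) S

/-- A symmetric (unitarily invariant) norm on complex `m × m` matrices. -/
structure IsSymmetricNorm {m : Type*} [Fintype m] [DecidableEq m]
    (N : Matrix m m ℂ → ℝ) : Prop where
  add_le : ∀ A B, N (A + B) ≤ N A + N B
  smul : ∀ (c : ℂ) (A), N (c • A) = ‖c‖ * N A
  eq_zero_of : ∀ A, N A = 0 → A = 0
  unitary_mul_left : ∀ (U : Matrix.unitaryGroup m ℂ) (A), N (U * A) = N A
  mul_unitary_right : ∀ (U : Matrix.unitaryGroup m ℂ) (A), N (A * U) = N A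

/-- Eigenvalues of a Hermitian matrix (junk value `0` if not Hermitian). -/
noncomputable def eigVals {m : Type*} [Fintype m] [DecidableEq m]
    (Z : Matrix m m ℂ) : m → ℝ :=
  if hZ : Z.IsHermitian then hZ.eigenvalues else 0

/-- Eigenvalues of a Hermitian `n × n` matrix listed in decreasing order. -/
noncomputable def eigDown {n : ℕ} (Z : Matrix (Fin n) (Fin n) ℂ) : Fin n → ℝ :=
  fun i => (eigVals Z ∘ Tuple.sort (eigVals Z)) i.rev

/-- `Z ^ ↓`: the diagonal matrix listing the eigenvalues of `Z` in decreasing order. -/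
noncomputable def downMat {n : ℕ} (Z : Matrix (Fin n) (Fin n) ℂ) : Matrix (Fin n) (Fin n) ℂ :=
  Matrix.diagonal (fun i => (eigDown Z i : ℂ))

/-- Schatten `p`-norm. -/
noncomputable def schattenNorm {m : Type*} [Fintype m] [DecidableEq m]
    (p : ℝ) (Z : Matrix m m ℂ) : ℝ :=
  (∑ i, eigVals (matAbs Z) i ^ p) ^ (1 / p)

/-- Operator norm (largest singular value). -/
noncomputable def opNormInf {m : Type*} [Fintype m] [DecidableEq m]
    (Z : Matrix m m ℂ) : ℝ :=
  ⨆ i, Real.sqrt (eigVals (Zᴴ * Z) i)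

/-- Numerical range. -/
def numRange {m : Type*} [Fintype m] (X : Matrix m m ℂ) : Set ℂ :=
  {z | ∃ x : m → ℂ, ∑ i, ‖x i‖ ^ 2 = 1 ∧ dotProduct (star x) (X *ᵥ x) = z}

/-- Numerical radius. -/
noncomputable def numRadius {m : Type*} [Fintype m] (X : Matrix m m ℂ) : ℝ :=
  sSup ((fun z : ℂ => ‖z‖) '' numRange X)

/-!
Write `M = S * S` with `S = M^{1/2}` Hermitian. For an orthogonal projection `P`,
`M = S P S + S (1 - P) S`, and `S P S = (S P)(S P)ᴴ` is unitarily similar to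
`(S P)ᴴ (S P) = P M P`, because `C Cᴴ` and `Cᴴ C` are Hermitian with the same characteristic
polynomial. With `P` the projection onto the first block this gives
`M = U (A ⊕ 0) Uᴴ + V (0 ⊕ B) Vᴴ` for every positive semi-definite block matrix; the theorem is
this applied to `W M Wᴴ`, where the unitary `W = (1/√2) [[I, I], [-I, I]]` turns the diagonal
blocks into `(A + B)/2 ± Re X`.
-/

theorem RCLike.inv_sqrt_two_mul_self {𝕜 : Type*} [RCLike 𝕜] :
    ((√2 : ℝ) : 𝕜)⁻¹ * ((√2 : ℝ) : 𝕜)⁻¹ = 1 / 2 := by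
  rw [← mul_inv, ← RCLike.ofReal_mul, Real.mul_self_sqrt zero_le_two, RCLike.ofReal_ofNat, one_div]

namespace Matrix

variable {𝕜 : Type*} [RCLike 𝕜]

section Compression

variable {m : Type*} [Fintype m] [DecidableEq m]

theorem IsHermitian.exists_unitary_eq_conj_of_charpoly_eq {A B : Matrix m m 𝕜}
    (hA : A.IsHermitian) (hB : B.IsHermitian) (h : A.charpoly = B.charpoly) :
    ∃ U : unitaryGroup m 𝕜, A = (U : Matrix m m 𝕜) * B * (U : Matrix m m 𝕜)ᴴ := by
  refine ⟨hA.eigenvectorUnitary * star hB.eigenvectorUnitary, ?_⟩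
  have hA_diag := hA.spectral_theorem
  rw [(hA.eigenvalues_eq_eigenvalues_iff hB).mpr h, ← hB.conjStarAlgAut_star_eigenvectorUnitary,
    ← Unitary.conjStarAlgAut_mul_apply, Unitary.conjStarAlgAut_apply] at hA_diag
  simpa [star_eq_conjTranspose] using hA_diag

theorem exists_unitary_mul_conjTranspose_self_eq (C : Matrix m m 𝕜) :
    ∃ U : unitaryGroup m 𝕜, C * Cᴴ = (U : Matrix m m 𝕜) * (Cᴴ * C) * (U : Matrix m m 𝕜)ᴴ :=
  (isHermitian_mul_conjTranspose_self C).exists_unitary_eq_conj_of_charpoly_eq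
    (isHermitian_conjTranspose_mul_self C) (charpoly_mul_comm _ _)

open scoped MatrixOrder in
theorem PosSemidef.exists_isHermitian_mul_self_eq {M : Matrix m m 𝕜} (hM : M.PosSemidef) :
    ∃ S : Matrix m m 𝕜, S.IsHermitian ∧ S * S = M :=
  ⟨CFC.sqrt M, (CFC.sqrt_nonneg M).posSemidef.isHermitian, CFC.sqrt_mul_sqrt_self M hM.nonneg⟩

theorem IsHermitian.exists_unitary_mul_mul_eq_conj {S P : Matrix m m 𝕜}
    (hS : S.IsHermitian) (hP : P.IsHermitian) (hPP : IsIdempotentElem P) :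
    ∃ U : unitaryGroup m 𝕜,
      S * P * S = (U : Matrix m m 𝕜) * (P * (S * S) * P) * (U : Matrix m m 𝕜)ᴴ := by
  obtain ⟨U, hU⟩ := exists_unitary_mul_conjTranspose_self_eq (S * P)
  refine ⟨U, ?_⟩
  simp only [conjTranspose_mul, hS.eq, hP.eq] at hU
  calc S * P * S = S * P * (P * S) := by rw [← mul_assoc, mul_assoc S P P, hPP.eq]
    _ = _ := by rw [hU]; simp only [mul_assoc]

theorem PosSemidef.exists_unitary_eq_add_compressions {M P : Matrix m m 𝕜} (hM : M.PosSemidef)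
    (hP : P.IsHermitian) (hPP : IsIdempotentElem P) :
    ∃ U V : unitaryGroup m 𝕜,
      M = (U : Matrix m m 𝕜) * (P * M * P) * (U : Matrix m m 𝕜)ᴴ +
        (V : Matrix m m 𝕜) * ((1 - P) * M * (1 - P)) * (V : Matrix m m 𝕜)ᴴ := by
  obtain ⟨S, hS, rfl⟩ := hM.exists_isHermitian_mul_self_eq
  obtain ⟨U, hU⟩ := hS.exists_unitary_mul_mul_eq_conj hP hPP
  obtain ⟨V, hV⟩ := hS.exists_unitary_mul_mul_eq_conj (isHermitian_one.sub hP) hPP.one_sub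
  refine ⟨U, V, ?_⟩
  rw [← hU, ← hV, ← add_mul, ← mul_add, add_sub_cancel, mul_one]

theorem PosSemidef.exists_unitary_fromBlocks_eq_add {n : Type*} [Fintype n] [DecidableEq n]
    {A : Matrix m m 𝕜} {B : Matrix n n 𝕜} {X : Matrix m n 𝕜} {Y : Matrix n m 𝕜}
    (h : (fromBlocks A X Y B).PosSemidef) :
    ∃ U V : unitaryGroup (m ⊕ n) 𝕜,
      fromBlocks A X Y B =
        (U : Matrix (m ⊕ n) (m ⊕ n) 𝕜) * fromBlocks A 0 0 0 * (U : Matrix (m ⊕ n) (m ⊕ n) 𝕜)ᴴ +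
        (V : Matrix (m ⊕ n) (m ⊕ n) 𝕜) * fromBlocks 0 0 0 B * (V : Matrix (m ⊕ n) (m ⊕ n) 𝕜)ᴴ := by
  have hP : (fromBlocks 1 0 0 0 : Matrix (m ⊕ n) (m ⊕ n) 𝕜).IsHermitian :=
    isHermitian_one.fromBlocks (by simp) isHermitian_zero
  have hPP : IsIdempotentElem (fromBlocks 1 0 0 0 : Matrix (m ⊕ n) (m ⊕ n) 𝕜) := by
    simp [IsIdempotentElem, fromBlocks_multiply]
  have hQ : (1 - fromBlocks 1 0 0 0 : Matrix (m ⊕ n) (m ⊕ n) 𝕜) = fromBlocks 0 0 0 1 := by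
    rw [sub_eq_iff_eq_add, fromBlocks_add]; simp
  obtain ⟨U, V, hUV⟩ := h.exists_unitary_eq_add_compressions hP hPP
  refine ⟨U, V, ?_⟩
  simpa [hQ, fromBlocks_multiply] using hUV

theorem eq_conj_add_conj_of_unitary_conj_eq {M D₁ D₂ : Matrix m m 𝕜} {W U V : unitaryGroup m 𝕜}
    (h : (W : Matrix m m 𝕜) * M * (W : Matrix m m 𝕜)ᴴ =
      (U : Matrix m m 𝕜) * D₁ * (U : Matrix m m 𝕜)ᴴ +
        (V : Matrix m m 𝕜) * D₂ * (V : Matrix m m 𝕜)ᴴ) :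
    M = ((star W * U : unitaryGroup m 𝕜) : Matrix m m 𝕜) * D₁ *
          ((star W * U : unitaryGroup m 𝕜) : Matrix m m 𝕜)ᴴ +
        ((star W * V : unitaryGroup m 𝕜) : Matrix m m 𝕜) * D₂ *
          ((star W * V : unitaryGroup m 𝕜) : Matrix m m 𝕜)ᴴ := by
  simp only [← star_eq_conjTranspose, ← Unitary.conjStarAlgAut_apply (S := 𝕜)] at h ⊢
  rw [Unitary.conjStarAlgAut_mul_apply, Unitary.conjStarAlgAut_mul_apply, ← map_add, ← h,
    ← Unitary.conjStarAlgAut_mul_apply]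
  simp

end Compression

section BlockRotation

variable {m : Type*} [DecidableEq m]

variable (𝕜 m) in
noncomputable def blockRotation : Matrix (m ⊕ m) (m ⊕ m) 𝕜 :=
  ((√2 : ℝ) : 𝕜)⁻¹ • fromBlocks 1 1 (-1) 1

theorem blockRotation_conjTranspose :
    (blockRotation 𝕜 m)ᴴ = ((√2 : ℝ) : 𝕜)⁻¹ • fromBlocks 1 (-1) 1 1 := by
  simp [blockRotation, fromBlocks_conjTranspose]

variable [Fintype m]

theorem blockRotation_mem_unitaryGroup : blockRotation 𝕜 m ∈ unitaryGroup (m ⊕ m) 𝕜 := by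
  rw [mem_unitaryGroup_iff, star_eq_conjTranspose, blockRotation_conjTranspose, blockRotation,
    smul_mul_smul, RCLike.inv_sqrt_two_mul_self, fromBlocks_multiply, ← fromBlocks_one,
    fromBlocks_smul]
  congr 1 <;> simp <;> module

theorem blockRotation_mul_fromBlocks_mul_conjTranspose (A X Y B : Matrix m m 𝕜) :
    blockRotation 𝕜 m * fromBlocks A X Y B * (blockRotation 𝕜 m)ᴴ =
      fromBlocks ((1 / 2 : 𝕜) • (A + B) + (1 / 2 : 𝕜) • (X + Y)) ((1 / 2 : 𝕜) • (B - A + X - Y))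
        ((1 / 2 : 𝕜) • (B - A - X + Y)) ((1 / 2 : 𝕜) • (A + B) - (1 / 2 : 𝕜) • (X + Y)) := by
  rw [blockRotation_conjTranspose, blockRotation, smul_mul, smul_mul_smul,
    RCLike.inv_sqrt_two_mul_self, fromBlocks_multiply, fromBlocks_multiply, fromBlocks_smul]
  congr 1 <;> simp <;> module

end BlockRotation

end Matrix

theorem decomposition_re {n : ℕ} (A B X : Matrix (Fin n) (Fin n) ℂ)
    (hM : (Matrix.fromBlocks A X Xᴴ B).PosSemidef) :
    ∃ U V : Matrix.unitaryGroup (Fin n ⊕ Fin n) ℂ,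
      Matrix.fromBlocks A X Xᴴ B =
        (U : Matrix (Fin n ⊕ Fin n) (Fin n ⊕ Fin n) ℂ) *
          Matrix.fromBlocks ((1 / 2 : ℂ) • (A + B) + (1 / 2 : ℂ) • (X + Xᴴ)) 0 0 0 *
          (U : Matrix (Fin n ⊕ Fin n) (Fin n ⊕ Fin n) ℂ)ᴴ +
        (V : Matrix (Fin n ⊕ Fin n) (Fin n ⊕ Fin n) ℂ) *
          Matrix.fromBlocks 0 0 0 ((1 / 2 : ℂ) • (A + B) - (1 / 2 : ℂ) • (X + Xᴴ)) *
          (V : Matrix (Fin n ⊕ Fin n) (Fin n ⊕ Fin n) ℂ)ᴴ := by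
  have hWM := hM.mul_mul_conjTranspose_same (blockRotation ℂ (Fin n))
  rw [blockRotation_mul_fromBlocks_mul_conjTranspose] at hWM
  obtain ⟨U, V, hUV⟩ := hWM.exists_unitary_fromBlocks_eq_add
  rw [← blockRotation_mul_fromBlocks_mul_conjTranspose] at hUV
  exact ⟨_, _, eq_conj_add_conj_of_unitary_conj_eq (W := ⟨_, blockRotation_mem_unitaryGroup⟩) hUV⟩
end

section
/- Let $A, B \in \mathbb{M}_n^+$. Then for every symmetric norm $\|\cdot\|$ on $\mathbb{M}_{2n}$ one has $\left\| \begin{bmatrix} A & 0 \\ 0 & B \end{bmatrix} \right\| \le \| A + B \|$, where on the right $A+B \in \mathbb{M}_n$ is embedded as the upper-left block of a matrix in $\mathbb{M}_{2n}$. -/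
open Matrix
open scoped ComplexOrder

/-! With `T = [[X, 0], [Y, 0]]` one has `Tᴴ T = [[Xᴴ X + Yᴴ Y, 0], [0, 0]]` while `T Tᴴ` has diagonal
blocks `X Xᴴ` and `Y Yᴴ`. The Hermitian matrices `Tᴴ T` and `T Tᴴ` have the same characteristic
polynomial, hence are unitarily similar and have the same symmetric norm. Deleting the off-diagonal
blocks of a matrix (pinching) does not increase a symmetric norm, since the block diagonal part is
the average of the matrix and its conjugate by the unitary `diag(1, -1)`.
Take `X = A^{1/2}` and `Y = B^{1/2}`. -/

open scoped MatrixOrder in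
theorem Matrix.PosSemidef.exists_isHermitian_mul_self_eq_s14 {𝕜 n : Type*} [RCLike 𝕜] [Fintype n]
    [DecidableEq n] {A : Matrix n n 𝕜} (hA : A.PosSemidef) :
    ∃ X : Matrix n n 𝕜, X.IsHermitian ∧ X * X = A :=
  ⟨CFC.sqrt A, (CFC.sqrt_nonneg A).posSemidef.1, CFC.sqrt_mul_sqrt_self A hA.nonneg⟩

namespace Matrix.IsHermitian

variable {𝕜 n : Type*} [RCLike 𝕜] [Fintype n] [DecidableEq n] {A B : Matrix n n 𝕜}

theorem exists_unitary_conj_eq_of_charpoly_eq (hA : A.IsHermitian) (hB : B.IsHermitian)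
    (h : A.charpoly = B.charpoly) :
    ∃ U : unitaryGroup n 𝕜, (U : Matrix n n 𝕜) * A * star (U : Matrix n n 𝕜) = B := by
  refine ⟨hB.eigenvectorUnitary * star hA.eigenvectorUnitary, ?_⟩
  have hAB := (hA.eigenvalues_eq_eigenvalues_iff hB).mpr h
  conv_rhs => rw [hB.spectral_theorem, ← hAB, ← conjStarAlgAut_star_eigenvectorUnitary hA]
  simp [Matrix.mul_assoc]

end Matrix.IsHermitian

namespace IsSymmetricNorm

section

variable {m : Type*} [Fintype m] [DecidableEq m] {N : Matrix m m ℂ → ℝ}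

theorem map_unitary_conj (hN : IsSymmetricNorm N) (U : unitaryGroup m ℂ) (X : Matrix m m ℂ) :
    N ((U : Matrix m m ℂ) * X * star (U : Matrix m m ℂ)) = N X := by
  rw [Matrix.mul_assoc, hN.unitary_mul_left]
  exact hN.mul_unitary_right (star U) X

theorem map_eq_of_charpoly_eq (hN : IsSymmetricNorm N) {X Y : Matrix m m ℂ}
    (hX : X.IsHermitian) (hY : Y.IsHermitian) (h : X.charpoly = Y.charpoly) : N X = N Y := by
  obtain ⟨U, rfl⟩ := hX.exists_unitary_conj_eq_of_charpoly_eq hY h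
  exact (hN.map_unitary_conj U X).symm

theorem map_conjTranspose_mul_self (hN : IsSymmetricNorm N) (X : Matrix m m ℂ) :
    N (Xᴴ * X) = N (X * Xᴴ) :=
  hN.map_eq_of_charpoly_eq (isHermitian_conjTranspose_mul_self X)
    (isHermitian_mul_conjTranspose_self X) (charpoly_mul_comm _ _)

end

variable {m k : Type*} [Fintype m] [DecidableEq m] [Fintype k] [DecidableEq k]

theorem map_fromBlocks_diag_le {N : Matrix (m ⊕ k) (m ⊕ k) ℂ → ℝ} (hN : IsSymmetricNorm N)
    (A : Matrix m m ℂ) (B : Matrix m k ℂ) (C : Matrix k m ℂ) (D : Matrix k k ℂ) :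
    N (fromBlocks A 0 0 D) ≤ N (fromBlocks A B C D) := by
  set M := fromBlocks A B C D
  set J : Matrix (m ⊕ k) (m ⊕ k) ℂ := fromBlocks 1 0 0 (-1)
  have hJ : J ∈ unitaryGroup (m ⊕ k) ℂ := by
    simp [J, mem_unitaryGroup_iff, star_eq_conjTranspose, fromBlocks_conjTranspose,
      fromBlocks_multiply, fromBlocks_one]
  -- conjugating by `J` flips the sign of the off-diagonal blocks
  have hpinch : fromBlocks A 0 0 D = (2 : ℂ)⁻¹ • (M + J * M * star J) := by
    norm_num [M, J, star_eq_conjTranspose, fromBlocks_conjTranspose, fromBlocks_multiply,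
      fromBlocks_add, fromBlocks_smul, ← add_smul]
  calc N (fromBlocks A 0 0 D) = 2⁻¹ * N (M + J * M * star J) := by
        rw [hpinch, hN.smul]; norm_num
    _ ≤ 2⁻¹ * (N M + N M) := by
        gcongr
        exact (hN.add_le _ _).trans_eq (by rw [hN.map_unitary_conj ⟨J, hJ⟩ M])
    _ = N M := by ring

theorem map_fromBlocks_mul_conjTranspose_le {N : Matrix (m ⊕ m) (m ⊕ m) ℂ → ℝ}
    (hN : IsSymmetricNorm N) (X Y : Matrix m m ℂ) :
    N (fromBlocks (X * Xᴴ) 0 0 (Y * Yᴴ)) ≤ N (fromBlocks (Xᴴ * X + Yᴴ * Y) 0 0 0) := by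
  set T : Matrix (m ⊕ m) (m ⊕ m) ℂ := fromBlocks X 0 Y 0
  calc N (fromBlocks (X * Xᴴ) 0 0 (Y * Yᴴ)) ≤ N (T * Tᴴ) := by
        simpa [T, fromBlocks_conjTranspose, fromBlocks_multiply] using
          hN.map_fromBlocks_diag_le (X * Xᴴ) (X * Yᴴ) (Y * Xᴴ) (Y * Yᴴ)
    _ = N (Tᴴ * T) := (hN.map_conjTranspose_mul_self T).symm
    _ = N (fromBlocks (Xᴴ * X + Yᴴ * Y) 0 0 0) := by
        simp [T, fromBlocks_conjTranspose, fromBlocks_multiply]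

end IsSymmetricNorm

theorem diag_block_norm_bound {n : ℕ} (A B : Matrix (Fin n) (Fin n) ℂ)
    (hA : A.PosSemidef) (hB : B.PosSemidef)
    (N : Matrix (Fin n ⊕ Fin n) (Fin n ⊕ Fin n) ℂ → ℝ) (hN : IsSymmetricNorm N) :
    N (Matrix.fromBlocks A 0 0 B) ≤ N (Matrix.fromBlocks (A + B) 0 0 0) := by
  obtain ⟨a, ha, rfl⟩ := hA.exists_isHermitian_mul_self_eq_s14
  obtain ⟨b, hb, rfl⟩ := hB.exists_isHermitian_mul_self_eq_s14
  simpa only [ha.eq, hb.eq] using hN.map_fromBlocks_mul_conjTranspose_le a b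
end
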